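/- There is a constant C₁>0 such that for all z,w,w₀∈𝔹 with d(z,w₀) > C₁·d(w,w₀), one has |⟨z,w₀⟩−⟨z,w⟩| ≤ (1/2)·|1−⟨z,w₀⟩|, and consequently |1−⟨z,w⟩| ≥ (1/2)·|1−⟨z,w₀⟩|. -/

import Mathlib

open MeasureTheory Complex
open scoped ENNReal NNReal

noncomputable section

/-- `ℂ^N` with the Euclidean norm. -/
abbrev EN (N : ℕ) := EuclideanSpace ℂ (Fin N)

instance (N : ℕ) : MeasurableSpace (EN N) := MeasurableSpace.comap WithLp.ofLp MeasurableSpace.pi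
instance (N : ℕ) : BorelSpace (EN N) := PiLp.borelSpace (p := 2) (X := fun _ : Fin N => ℂ)

/-- Lebesgue measure on `ℂ^N`. -/
def volEN (N : ℕ) : Measure (EN N) :=
  Measure.map (WithLp.toLp 2) (Measure.pi fun _ : Fin N => (volume : Measure ℂ))

/-- The Hermitian pairing `⟨z,w⟩ = ∑ z_j conj (w_j)`. -/
def bInner {N : ℕ} (z w : EN N) : ℂ := ∑ j, z j * (starRingEnd ℂ) (w j)

/-- The open unit ball `𝔹` of `ℂ^N`. -/
def ball01 (N : ℕ) : Set (EN N) := Metric.ball 0 1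

/-- Lebesgue measure on the unit ball, normalized so that `μ(𝔹) = 1`. -/
def muB (N : ℕ) : Measure (EN N) :=
  (volEN N (Metric.ball (0 : EN N) 1))⁻¹ • (volEN N).restrict (Metric.ball (0 : EN N) 1)

/-- The weighted measure `dμ_q = (1-|z|²)^q dμ`. -/
def muW (N : ℕ) (q : ℝ) : Measure (EN N) :=
  (muB N).withDensity fun z => ENNReal.ofReal ((1 - ‖z‖ ^ 2) ^ q)

/-- The Bergman–Besov kernel `K_a`. -/
def kernelK (N : ℕ) (a : ℝ) (z w : EN N) : ℂ :=
  if -((N : ℝ) + 1) < a then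
    (1 - bInner z w) ^ (-((N : ℂ) + 1 + (a : ℂ)))
  else
    ∑' k : ℕ, ((Nat.factorial k : ℂ)
        / ((Real.Gamma ((1 - (N : ℝ) - a) + k) / Real.Gamma (1 - (N : ℝ) - a) : ℝ) : ℂ))
      * bInner z w ^ k

/-- The operator `T_{a,b}`. -/
def Tab (N : ℕ) (a b : ℝ) (f : EN N → ℂ) (z : EN N) : ℂ :=
  ∫ w, kernelK N a z w * f w * (((1 - ‖w‖ ^ 2) ^ b : ℝ) : ℂ) ∂(muB N)

/-- The operator `P_{s,t}`. -/
def Pop (N : ℕ) (s t : ℝ) (f : EN N → ℂ) (z : EN N) : ℂ :=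
  (((1 - ‖z‖ ^ 2) ^ t : ℝ) : ℂ) * Tab N (s + t) s f z

/-- The positive operator `S_{a,b}`. -/
def Sop (N : ℕ) (a b : ℝ) (f : EN N → ℂ) (z : EN N) : ℝ≥0∞ :=
  ∫⁻ w, ENNReal.ofReal (‖kernelK N a z w‖ * ‖f w‖ * (1 - ‖w‖ ^ 2) ^ b) ∂(muB N)

/-- Absolute convergence of the integral defining `T_{a,b} f (z)`. -/
def TIntegrable (N : ℕ) (a b : ℝ) (f : EN N → ℂ) (z : EN N) : Prop :=
  Integrable (fun w => kernelK N a z w * f w * (((1 - ‖w‖ ^ 2) ^ b : ℝ) : ℂ)) (muB N)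

/-- `∫_𝔹 |f|^p ω dμ_q`. -/
def wLp (N : ℕ) (p q : ℝ) (ω : EN N → ℝ) (f : EN N → ℂ) : ℝ≥0∞ :=
  ∫⁻ z, ENNReal.ofReal (‖f z‖ ^ p * ω z) ∂(muW N q)

/-- A weight: positive on `𝔹` and locally integrable there. -/
def IsWeight (N : ℕ) (ω : EN N → ℝ) : Prop :=
  Measurable ω ∧ (∀ z ∈ ball01 N, 0 < ω z) ∧ LocallyIntegrableOn ω (ball01 N) (volEN N)

/-- `T_{a,b}` is well defined and continuous from `L^p(ω dμ_q)` to `L^p(ω dμ_Q)`. -/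
def TBounded (N : ℕ) (p a b q Q : ℝ) (ω : EN N → ℝ) : Prop :=
  (∀ f : EN N → ℂ, Measurable f → wLp N p q ω f < ⊤ → ∀ z ∈ ball01 N, TIntegrable N a b f z) ∧
  ∃ C : ℝ, ∀ f : EN N → ℂ, Measurable f → wLp N p q ω f < ⊤ →
    wLp N p Q ω (Tab N a b f) ≤ ENNReal.ofReal C * wLp N p q ω f

/-- `P_{s,t}` is well defined and continuous from `L^p(ω dμ_q)` to `L^p(ω dμ_Q)`. -/
def PBounded (N : ℕ) (p s t q Q : ℝ) (ω : EN N → ℝ) : Prop :=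
  (∀ f : EN N → ℂ, Measurable f → wLp N p q ω f < ⊤ → ∀ z ∈ ball01 N,
      TIntegrable N (s + t) s f z) ∧
  ∃ C : ℝ, ∀ f : EN N → ℂ, Measurable f → wLp N p q ω f < ⊤ →
    wLp N p Q ω (Pop N s t f) ≤ ENNReal.ofReal C * wLp N p q ω f

/-- `S_{a,b}` is well defined and continuous from `L^p(ω dμ_q)` to `L^p(ω dμ_Q)`. -/
def SBounded (N : ℕ) (p a b q Q : ℝ) (ω : EN N → ℝ) : Prop :=
  (∀ f : EN N → ℂ, Measurable f → wLp N p q ω f < ⊤ → ∀ z ∈ ball01 N, Sop N a b f z < ⊤) ∧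
  ∃ C : ℝ, ∀ f : EN N → ℂ, Measurable f → wLp N p q ω f < ⊤ →
    ∫⁻ z, Sop N a b f z ^ p * ENNReal.ofReal (ω z) ∂(muW N Q) ≤
      ENNReal.ofReal C * wLp N p q ω f

/-- The pseudo-distance `d(z,w) = ||z|-|w|| + |1 - ⟨z,w⟩/(|z||w|)|`. -/
def pd {N : ℕ} (z w : EN N) : ℝ :=
  |‖z‖ - ‖w‖| + ‖1 - bInner z w / ((‖z‖ : ℂ) * (‖w‖ : ℂ))‖

/-- The pseudoball `B(ζ,R)`. -/
def pball (N : ℕ) (ζ : EN N) (R : ℝ) : Set (EN N) := {z ∈ ball01 N | pd z ζ < R}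

/-- The maximal function `m'_{a,b}`. -/
def mMax' (N : ℕ) (a b : ℝ) (f : EN N → ℂ) (z : EN N) : ℝ≥0∞ :=
  ⨆ (ζ : EN N) (_ : ‖ζ‖ < 1) (R : ℝ) (_ : 1 - ‖ζ‖ < R) (_ : z ∈ pball N ζ R),
    ENNReal.ofReal (R ^ (-((N : ℝ) + 1 + a))) *
      ∫⁻ w in pball N ζ R, ENNReal.ofReal (‖f w‖ * (1 - ‖w‖ ^ 2) ^ b) ∂(muB N)

/-- The maximal function `m_{a,b}`. -/
def mMax (N : ℕ) (a b : ℝ) (f : EN N → ℂ) (z : EN N) : ℝ≥0∞ :=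
  ⨆ (ζ : EN N) (_ : ‖ζ‖ < 1) (R : ℝ) (_ : 1 - ‖ζ‖ < R) (_ : z ∈ pball N ζ R),
    (muW N a (pball N ζ R))⁻¹ *
      ∫⁻ w in pball N ζ R, ENNReal.ofReal (‖f w‖ * (1 - ‖w‖ ^ 2) ^ b) ∂(muB N)

/-- Normalizing factor in the Békollé–Bonami type class `D_p^{s,t,q,Q}`. -/
def Dnorm (N : ℕ) (p s t q Q : ℝ) (ζ : EN N) (R : ℝ) : ℝ≥0∞ :=
  if -1 < s + t then (muW N (s + t + (Q - q) / p) (pball N ζ R))⁻¹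
  else ENNReal.ofReal (R ^ (-((N : ℝ) + 1 + s + t + (Q - q) / p)))

/-- The `D_p^{s,t,q,Q}` characteristic of the weight `ω`. -/
def Dconst (N : ℕ) (p s t q Q : ℝ) (ω : EN N → ℝ) : ℝ≥0∞ :=
  ⨆ (ζ : EN N) (_ : ‖ζ‖ < 1) (R : ℝ) (_ : 1 - ‖ζ‖ < R),
    (Dnorm N p s t q Q ζ R *
        ∫⁻ z in pball N ζ R, ENNReal.ofReal (ω z) ∂(muW N (Q + p * t))) *
    (Dnorm N p s t q Q ζ R *
        ∫⁻ z in pball N ζ R, ENNReal.ofReal (ω z ^ (-(1 / (p - 1))))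
          ∂(muW N (q + (p / (p - 1)) * (s - q)))) ^ (p - 1)

/-!
Write `d = pd w w₀` and `K = |1 - ⟨z,w₀⟩|`. One always has `pd z w₀ ≤ 5 K`, so the hypothesis
forces `d < K / 36`. Split `z` along the unit vector `e = w₀ / |w₀|`: the component along `e`
contributes at most `|⟨w₀ - w, e⟩| ≤ d`, and the orthogonal part has
`|z - ⟨z,e⟩e|² = |z|² - |⟨z,e⟩|² ≤ 2 K`, while `|w₀ - w|² ≤ 2 d`. Hence
`|⟨z,w₀⟩ - ⟨z,w⟩| ≤ d + 2 √(d K) < K / 2`, and the second inequality is the triangle inequality.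
-/

open scoped InnerProductSpace

section InnerProduct

variable {E : Type*} [NormedAddCommGroup E] [InnerProductSpace ℂ E]

theorem norm_sub_inner_smul_sq {v : E} (hv : ‖v‖ = 1) (z : E) :
    ‖z - ⟪v, z⟫_ℂ • v‖ ^ 2 = ‖z‖ ^ 2 - ‖⟪v, z⟫_ℂ‖ ^ 2 := by
  have hre : RCLike.re ⟪z, ⟪v, z⟫_ℂ • v⟫_ℂ = ‖⟪v, z⟫_ℂ‖ ^ 2 := by
    rw [inner_smul_right, ← inner_conj_symm z v, mul_conj, normSq_eq_norm_sq]
    rfl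
  rw [@norm_sub_sq ℂ, hre, norm_smul, hv]
  ring

theorem norm_inner_le_norm_inner_mul_add (x v z : E) :
    ‖⟪x, z⟫_ℂ‖ ≤ ‖⟪x, v⟫_ℂ‖ * ‖⟪v, z⟫_ℂ‖ + ‖x‖ * ‖z - ⟪v, z⟫_ℂ • v‖ := by
  have hsplit : ⟪x, z⟫_ℂ = ⟪v, z⟫_ℂ * ⟪x, v⟫_ℂ + ⟪x, z - ⟪v, z⟫_ℂ • v⟫_ℂ := by
    rw [inner_sub_right, inner_smul_right]; ring
  calc ‖⟪x, z⟫_ℂ‖ ≤ ‖⟪v, z⟫_ℂ * ⟪x, v⟫_ℂ‖ + ‖⟪x, z - ⟪v, z⟫_ℂ • v⟫_ℂ‖ :=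
        hsplit ▸ norm_add_le _ _
    _ ≤ ‖⟪x, v⟫_ℂ‖ * ‖⟪v, z⟫_ℂ‖ + ‖x‖ * ‖z - ⟪v, z⟫_ℂ • v‖ := by
        rw [norm_mul, mul_comm]
        gcongr
        exact norm_inner_le_norm _ _

theorem norm_inner_sub_le_of_norm_le_one {z w₀ : E} (hz : ‖z‖ ≤ 1) (hw₀ : ‖w₀‖ ≤ 1)
    (hw₀0 : w₀ ≠ 0) (w : E) :
    ‖⟪w₀ - w, z⟫_ℂ‖ ≤
      ‖(‖w₀‖ : ℂ) - ⟪w₀, w⟫_ℂ / ‖w₀‖‖ + ‖w₀ - w‖ * √(2 * ‖1 - ⟪w₀, z⟫_ℂ‖) := by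
  have hr : 0 < ‖w₀‖ := norm_pos_iff.mpr hw₀0
  set e : E := ((‖w₀‖⁻¹ : ℝ) : ℂ) • w₀
  have he : ‖e‖ = 1 := by
    rw [norm_smul, norm_real, Real.norm_eq_abs, abs_inv, abs_norm, inv_mul_cancel₀ hr.ne']
  have hinner (y : E) : ⟪e, y⟫_ℂ = ⟪w₀, y⟫_ℂ / ‖w₀‖ := by
    rw [inner_smul_left, conj_ofReal, ofReal_inv, inv_mul_eq_div]
  have hex : ‖⟪w₀ - w, e⟫_ℂ‖ = ‖(‖w₀‖ : ℂ) - ⟪w₀, w⟫_ℂ / ‖w₀‖‖ := by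
    have hr' : (‖w₀‖ : ℂ) ≠ 0 := ofReal_ne_zero.mpr hr.ne'
    rw [← norm_inner_symm, hinner, inner_sub_right, inner_self_eq_norm_sq_to_K, sub_div]
    congr 2
    field_simp
    rfl
  have hez : ‖⟪e, z⟫_ℂ‖ ≤ 1 := (norm_inner_le_norm e z).trans (by rw [he, one_mul]; exact hz)
  have hw₀z : ‖⟪w₀, z⟫_ℂ‖ ≤ ‖⟪e, z⟫_ℂ‖ := by
    rw [hinner, norm_div, norm_real, Real.norm_eq_abs, abs_norm]
    exact le_div_self (norm_nonneg _) hr hw₀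
  have hperp : ‖z - ⟪e, z⟫_ℂ • e‖ ≤ √(2 * ‖1 - ⟪w₀, z⟫_ℂ‖) := by
    apply Real.le_sqrt_of_sq_le
    have := norm_sub_norm_le (1 : ℂ) ⟪w₀, z⟫_ℂ
    rw [norm_one] at this
    rw [norm_sub_inner_smul_sq he]
    nlinarith [norm_nonneg ⟪e, z⟫_ℂ, norm_nonneg z]
  calc ‖⟪w₀ - w, z⟫_ℂ‖ ≤ ‖⟪w₀ - w, e⟫_ℂ‖ * ‖⟪e, z⟫_ℂ‖ + ‖w₀ - w‖ * ‖z - ⟪e, z⟫_ℂ • e‖ :=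
        norm_inner_le_norm_inner_mul_add _ _ _
    _ ≤ ‖⟪w₀ - w, e⟫_ℂ‖ * 1 + ‖w₀ - w‖ * √(2 * ‖1 - ⟪w₀, z⟫_ℂ‖) := by gcongr
    _ = _ := by rw [mul_one, hex]

end InnerProduct

section Scalar

variable {a b : ℝ} {u : ℂ}

theorem mul_norm_one_sub_div (ha : 0 ≤ a) (hb : 0 ≤ b) (hu : ‖u‖ ≤ a * b) :
    a * b * ‖1 - u / (a * b)‖ = ‖(a * b : ℂ) - u‖ := by
  rcases (mul_nonneg ha hb).eq_or_lt with hab | hab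
  · have hu0 : u = 0 := norm_le_zero_iff.mp (hab ▸ hu)
    rw [← hab, hu0, ← ofReal_mul, ← hab]
    simp
  · have hab' : (a * b : ℂ) ≠ 0 := by exact_mod_cast hab.ne'
    rw [← abs_of_pos hab, ← Real.norm_eq_abs, ← norm_real, ← norm_mul, ofReal_mul, mul_one_sub,
      mul_div_cancel₀ _ hab']

theorem abs_sub_le_norm_one_sub (ha : 0 ≤ a) (ha1 : a ≤ 1) (hb : 0 ≤ b) (hb1 : b ≤ 1)
    (hu : ‖u‖ ≤ a * b) : |a - b| ≤ ‖1 - u‖ := by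
  have := norm_sub_norm_le (1 : ℂ) u
  rw [norm_one] at this
  rw [abs_le]
  constructor <;> nlinarith

theorem norm_one_sub_div_le (ha : 0 ≤ a) (ha1 : a ≤ 1) (hb : 0 ≤ b) (hb1 : b ≤ 1)
    (hu : ‖u‖ ≤ a * b) : ‖1 - u / (a * b)‖ ≤ 4 * ‖1 - u‖ := by
  have hK : 1 - a * b ≤ ‖1 - u‖ := by
    have := norm_sub_norm_le (1 : ℂ) u
    rw [norm_one] at this
    linarith
  have hdiv : ‖u / (a * b)‖ ≤ 1 := by
    rw [norm_div, ← ofReal_mul, norm_real, Real.norm_of_nonneg (mul_nonneg ha hb)]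
    exact div_le_one_of_le₀ hu (mul_nonneg ha hb)
  have hle_two : ‖1 - u / (a * b)‖ ≤ 2 := by
    linarith [norm_sub_le (1 : ℂ) (u / (a * b)), norm_one (α := ℂ)]
  have hmul : a * b * ‖1 - u / (a * b)‖ ≤ 2 * ‖1 - u‖ := by
    rw [mul_norm_one_sub_div ha hb hu]
    have hsplit : (a * b : ℂ) - u = (1 - u) - ((1 - a * b : ℝ) : ℂ) := by push_cast; ring
    rw [hsplit]
    refine (norm_sub_le _ _).trans ?_
    rw [norm_real, Real.norm_of_nonneg (by nlinarith)]
    linarith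
  rcases le_or_gt (a * b) (1 / 2) with hsmall | hlarge
  · linarith
  · nlinarith [norm_nonneg (1 - u / (a * b))]

theorem norm_ofReal_sub_div_le (ha : 0 ≤ a) (ha1 : a ≤ 1) (hb : 0 ≤ b) (hu : ‖u‖ ≤ a * b) :
    ‖(b : ℂ) - u / b‖ ≤ |a - b| + ‖1 - u / (a * b)‖ := by
  rcases hb.eq_or_lt with rfl | hb0
  · simp only [ofReal_zero, div_zero, sub_zero, norm_zero]
    positivity
  have hb' : (b : ℂ) ≠ 0 := ofReal_ne_zero.mpr hb0.ne'
  have hsplit : (b : ℂ) - u / b = (b - a : ℝ) + ((a * b : ℂ) - u) / b := by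
    push_cast; field_simp; ring
  have hnorm : ‖((a * b : ℂ) - u) / b‖ = a * ‖1 - u / (a * b)‖ := by
    rw [norm_div, ← mul_norm_one_sub_div ha hb hu, norm_real, Real.norm_of_nonneg hb]
    field_simp
  rw [hsplit]
  refine (norm_add_le _ _).trans ?_
  rw [hnorm, norm_real, Real.norm_eq_abs, abs_sub_comm]
  gcongr
  nlinarith [norm_nonneg (1 - u / (a * b))]

theorem sq_add_sq_sub_two_mul_re_le (ha : 0 ≤ a) (ha1 : a ≤ 1) (hb : 0 ≤ b) (hb1 : b ≤ 1)
    (hu : ‖u‖ ≤ a * b) : a ^ 2 + b ^ 2 - 2 * u.re ≤ 2 * (|a - b| + ‖1 - u / (a * b)‖) := by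
  have hre : a * b - u.re ≤ ‖1 - u / (a * b)‖ := by
    have hle : a * b - u.re ≤ ‖(a * b : ℂ) - u‖ := by
      simpa using re_le_norm ((a * b : ℂ) - u)
    rw [← mul_norm_one_sub_div ha hb hu] at hle
    nlinarith [norm_nonneg (1 - u / (a * b)), mul_le_one₀ ha1 hb hb1]
  have hsq : (a - b) ^ 2 ≤ |a - b| := by
    rw [← sq_abs, sq]
    exact mul_le_of_le_one_left (abs_nonneg _) (abs_sub_le_iff.mpr ⟨by linarith, by linarith⟩)
  nlinarith

end Scalar

section Ball

variable {N : ℕ}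

theorem bInner_eq_inner (z w : EN N) : bInner z w = ⟪w, z⟫_ℂ := by
  simp only [bInner, PiLp.inner_apply, RCLike.inner_apply]

theorem norm_bInner_le (z w : EN N) : ‖bInner z w‖ ≤ ‖z‖ * ‖w‖ := by
  rw [bInner_eq_inner, mul_comm]
  exact norm_inner_le_norm w z

theorem pd_nonneg (z w : EN N) : 0 ≤ pd z w :=
  add_nonneg (abs_nonneg _) (norm_nonneg _)

theorem pd_zero_right (z : EN N) : pd z 0 = ‖z‖ + 1 := by
  simp [pd, bInner]

theorem pd_le_five_mul {z w : EN N} (hz : ‖z‖ ≤ 1) (hw : ‖w‖ ≤ 1) :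
    pd z w ≤ 5 * ‖1 - bInner z w‖ := by
  have h := norm_bInner_le z w
  have := abs_sub_le_norm_one_sub (norm_nonneg z) hz (norm_nonneg w) hw h
  have := norm_one_sub_div_le (norm_nonneg z) hz (norm_nonneg w) hw h
  rw [pd]
  linarith

theorem norm_sub_div_le_pd {w : EN N} (hw : ‖w‖ ≤ 1) (w₀ : EN N) :
    ‖(‖w₀‖ : ℂ) - bInner w w₀ / ‖w₀‖‖ ≤ pd w w₀ :=
  norm_ofReal_sub_div_le (norm_nonneg w) hw (norm_nonneg w₀) (norm_bInner_le w w₀)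

theorem norm_sub_sq_le_two_mul_pd {w w₀ : EN N} (hw : ‖w‖ ≤ 1) (hw₀ : ‖w₀‖ ≤ 1) :
    ‖w₀ - w‖ ^ 2 ≤ 2 * pd w w₀ := by
  have := sq_add_sq_sub_two_mul_re_le (norm_nonneg w) hw (norm_nonneg w₀) hw₀
    (norm_bInner_le w w₀)
  rw [@norm_sub_sq ℂ, ← bInner_eq_inner, RCLike.re_to_complex, pd]
  linarith

theorem norm_bInner_sub_bInner_le {z w w₀ : EN N} (hz : ‖z‖ ≤ 1) (hw : ‖w‖ ≤ 1)
    (hw₀ : ‖w₀‖ ≤ 1) (hw₀0 : w₀ ≠ 0) :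
    ‖bInner z w₀ - bInner z w‖ ≤ pd w w₀ + 2 * √(pd w w₀ * ‖1 - bInner z w₀‖) := by
  have hfar : ‖w₀ - w‖ ≤ √(2 * pd w w₀) :=
    Real.le_sqrt_of_sq_le (norm_sub_sq_le_two_mul_pd hw hw₀)
  calc ‖bInner z w₀ - bInner z w‖ = ‖⟪w₀ - w, z⟫_ℂ‖ := by
        rw [bInner_eq_inner, bInner_eq_inner, inner_sub_left]
    _ ≤ ‖(‖w₀‖ : ℂ) - ⟪w₀, w⟫_ℂ / ‖w₀‖‖ + ‖w₀ - w‖ * √(2 * ‖1 - ⟪w₀, z⟫_ℂ‖) :=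
        norm_inner_sub_le_of_norm_le_one hz hw₀ hw₀0 w
    _ ≤ pd w w₀ + √(2 * pd w w₀) * √(2 * ‖1 - bInner z w₀‖) := by
        rw [← bInner_eq_inner, ← bInner_eq_inner]
        gcongr
        exact norm_sub_div_le_pd hw w₀
    _ = pd w w₀ + 2 * √(pd w w₀ * ‖1 - bInner z w₀‖) := by
        rw [← Real.sqrt_mul (by linarith [pd_nonneg w w₀]),
          show 2 * pd w w₀ * (2 * ‖1 - bInner z w₀‖) = 2 ^ 2 * (pd w w₀ * ‖1 - bInner z w₀‖) by
            ring,
          Real.sqrt_mul (by norm_num), Real.sqrt_sq (by norm_num)]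

end Ball

theorem stmt17_general (N : ℕ) :
    ∃ C₁ : ℝ, 0 < C₁ ∧ ∀ z w w₀ : EN N, ‖z‖ < 1 → ‖w‖ < 1 → ‖w₀‖ < 1 →
      C₁ * pd w w₀ < pd z w₀ →
      ‖bInner z w₀ - bInner z w‖ ≤ 1 / 2 * ‖1 - bInner z w₀‖ ∧
      1 / 2 * ‖1 - bInner z w₀‖ ≤ ‖1 - bInner z w‖ := by
  refine ⟨180, by norm_num, fun z w w₀ hz hw hw₀ hfar => ?_⟩
  have hw₀0 : w₀ ≠ 0 := by
    rintro rfl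
    rw [pd_zero_right, pd_zero_right] at hfar
    linarith [norm_nonneg w]
  have hnear := norm_bInner_sub_bInner_le hz.le hw.le hw₀.le hw₀0
  set d := pd w w₀
  set K := ‖1 - bInner z w₀‖
  have hd : 0 ≤ d := pd_nonneg w w₀
  have hdK : 36 * d < K := by linarith [pd_le_five_mul hz.le hw₀.le]
  have hsqrt : √(d * K) ≤ K / 6 := Real.sqrt_le_iff.mpr ⟨by linarith, by nlinarith⟩
  have hclose : ‖bInner z w₀ - bInner z w‖ ≤ 1 / 2 * K := by linarith
  refine ⟨hclose, ?_⟩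
  have htri := norm_sub_le_norm_sub_add_norm_sub 1 (bInner z w) (bInner z w₀)
  rw [norm_sub_rev (bInner z w)] at htri
  linarith

/-- There is `C₁ > 0` such that whenever `d(z,w₀) > C₁ d(w,w₀)` one has
`|⟨z,w₀⟩ - ⟨z,w⟩| ≤ |1-⟨z,w₀⟩|/2`, and consequently `|1-⟨z,w⟩| ≥ |1-⟨z,w₀⟩|/2`. -/
theorem stmt17 (N : ℕ) (hN : 1 ≤ N) :
    ∃ C₁ : ℝ, 0 < C₁ ∧ ∀ z w w₀ : EN N, ‖z‖ < 1 → ‖w‖ < 1 → ‖w₀‖ < 1 →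
      C₁ * pd w w₀ < pd z w₀ →
      ‖bInner z w₀ - bInner z w‖ ≤ 1 / 2 * ‖1 - bInner z w₀‖ ∧
      1 / 2 * ‖1 - bInner z w₀‖ ≤ ‖1 - bInner z w‖ :=
  stmt17_general N
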